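/- For every n ≥ 2 there exists a matroid on the ground set of all unordered pairs of distinct elements of Fin n (the edges of the complete graph K_n) whose independent sets are exactly the (2,3)-sparse edge sets. -/

import Mathlib

open Finset

/-- The vertex span `V(E)`: vertices incident to at least one edge of `E`. -/
def vertexSpan {V : Type*} [Fintype V] [DecidableEq V] (E : Finset (Sym2 V)) : Finset V :=
  Finset.univ.filter fun v => ∃ e ∈ E, v ∈ e

/-- `(2,3)`-sparsity: every nonempty subset `E' ⊆ E` has `|E'| ≤ 2|V(E')| - 3`. -/
def Sparse23 {V : Type*} [Fintype V] [DecidableEq V] (E : Finset (Sym2 V)) : Prop :=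
  ∀ E' ⊆ E, E'.Nonempty → (E'.card : ℤ) ≤ 2 * (vertexSpan E').card - 3

/-!
Augmentation is the only matroid axiom with content. Call an edge set tight if it attains
`|T| = 2|V(T)| - 3`. Inside a sparse set `I`, two tight sets sharing two vertices have a tight
union, so distinct maximal tight subsets of `I` share at most one vertex and hence no edge. If no
edge of a sparse set `J` can be added to `I`, every edge of `J` has both ends in some maximal
tight `T ⊆ I`, and sparsity of `J` allows at most `2|V(T)| - 3 = |T|` such edges for each `T`;
summing gives `|J| ≤ |I|`.
-/

lemma Finset.two_le_card_of_mem_sym2 {α : Type*} [DecidableEq α] {s : Finset α} {e : Sym2 α}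
    (he : ¬ e.IsDiag) (hs : e ∈ s.sym2) : 2 ≤ s.card := by
  induction e using Sym2.ind with
  | _ a b =>
    have hab : a ≠ b := he
    rw [← card_pair hab]
    exact card_le_card (by simpa [insert_subset_iff] using hs)

section Sparsity

variable {V : Type*} [Fintype V] [DecidableEq V] {E F I J T T₁ T₂ : Finset (Sym2 V)}
  {e : Sym2 V}

@[simp]
lemma mem_vertexSpan {v : V} : v ∈ vertexSpan E ↔ ∃ e ∈ E, v ∈ e := by
  simp [vertexSpan]

lemma vertexSpan_mono (h : E ⊆ F) : vertexSpan E ⊆ vertexSpan F := by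
  intro v
  simp only [mem_vertexSpan]
  exact fun ⟨e, he, hv⟩ => ⟨e, h he, hv⟩

lemma vertexSpan_union (E F : Finset (Sym2 V)) :
    vertexSpan (E ∪ F) = vertexSpan E ∪ vertexSpan F := by
  ext v
  simp only [mem_vertexSpan, mem_union, or_and_right, exists_or]

lemma vertexSpan_inter_subset (E F : Finset (Sym2 V)) :
    vertexSpan (E ∩ F) ⊆ vertexSpan E ∩ vertexSpan F :=
  subset_inter (vertexSpan_mono inter_subset_left) (vertexSpan_mono inter_subset_right)

lemma vertexSpan_singleton_mk (a b : V) : vertexSpan {s(a, b)} = {a, b} := by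
  ext v
  simp

lemma vertexSpan_subset_iff {W : Finset V} : vertexSpan E ⊆ W ↔ E ⊆ W.sym2 := by
  simp only [subset_iff, mem_vertexSpan, mem_sym2_iff]
  exact ⟨fun h e he v hv => h ⟨e, he, hv⟩, fun h v ⟨e, he, hv⟩ => h he v hv⟩

lemma mem_sym2_vertexSpan (he : e ∈ E) : e ∈ (vertexSpan E).sym2 :=
  vertexSpan_subset_iff.1 Subset.rfl he

lemma card_vertexSpan_singleton (he : ¬ e.IsDiag) : (vertexSpan {e}).card = 2 := by
  induction e using Sym2.ind with
  | _ a b => rw [vertexSpan_singleton_mk, card_pair he]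

lemma sparse23_empty : Sparse23 (∅ : Finset (Sym2 V)) := by
  intro E' hE' hne
  simp [subset_empty.1 hE'] at hne

lemma Sparse23.mono (hE : Sparse23 E) (h : F ⊆ E) : Sparse23 F :=
  fun E' hE' => hE E' (hE'.trans h)

lemma Sparse23.not_isDiag (hE : Sparse23 E) (he : e ∈ E) : ¬ e.IsDiag := by
  induction e using Sym2.ind with
  | _ a b =>
    intro hab
    obtain rfl : a = b := hab
    have := hE {s(a, a)} (singleton_subset_iff.2 he) (singleton_nonempty _)
    simp [vertexSpan_singleton_mk] at this

/-- Unlike the definition of `Sparse23`, this also bounds `E = ∅`. -/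
lemma Sparse23.card_le {W : Finset V} (hE : Sparse23 E) (hW : vertexSpan E ⊆ W)
    (hW2 : 2 ≤ W.card) : (E.card : ℤ) ≤ 2 * W.card - 3 := by
  rcases E.eq_empty_or_nonempty with rfl | hne
  · simp only [card_empty, Nat.cast_zero]
    omega
  · have := hE E Subset.rfl hne
    have := card_le_card hW
    omega

def Tight23 (T : Finset (Sym2 V)) : Prop :=
  (T.card : ℤ) = 2 * (vertexSpan T).card - 3

lemma tight23_singleton (he : ¬ e.IsDiag) : Tight23 {e} := by
  simp [Tight23, card_vertexSpan_singleton he]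

lemma Tight23.two_le_card_vertexSpan (hT : Tight23 T) : 2 ≤ (vertexSpan T).card := by
  unfold Tight23 at hT
  omega

lemma Tight23.union (hI : Sparse23 I) (h₁ : T₁ ⊆ I) (h₂ : T₂ ⊆ I) (ht₁ : Tight23 T₁)
    (ht₂ : Tight23 T₂) (hV : 2 ≤ (vertexSpan T₁ ∩ vertexSpan T₂).card) :
    Tight23 (T₁ ∪ T₂) := by
  have hinter := (hI.mono (inter_subset_left.trans h₁)).card_le
    (vertexSpan_inter_subset T₁ T₂) hV
  have hunion := (hI.mono (union_subset h₁ h₂)).card_le (le_refl _)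
    (ht₁.two_le_card_vertexSpan.trans (card_le_card (vertexSpan_mono subset_union_left)))
  have hE := card_union_add_card_inter T₁ T₂
  have hV := card_union_add_card_inter (vertexSpan T₁) (vertexSpan T₂)
  unfold Tight23 at ht₁ ht₂ ⊢
  rw [vertexSpan_union] at hunion ⊢
  omega

lemma exists_tight23_of_not_sparse23_insert (hI : Sparse23 I) (he : ¬ e.IsDiag)
    (h : ¬ Sparse23 (insert e I)) :
    ∃ T ⊆ I, Tight23 T ∧ e ∈ (vertexSpan T).sym2 := by
  simp only [Sparse23, not_forall, not_le] at h
  obtain ⟨E', hE', hne, hcard⟩ := h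
  have heE' : e ∈ E' := by
    by_contra heE'
    exact (hI E' ((subset_insert_iff_of_notMem heE').1 hE') hne).not_gt hcard
  set T := E'.erase e
  have hTI : T ⊆ I := subset_insert_iff.1 hE'
  have hTE' : vertexSpan T ⊆ vertexSpan E' := vertexSpan_mono (erase_subset e E')
  have hT : T.card + 1 = E'.card := card_erase_add_one heE'
  have hT_le := (hI.mono hTI).card_le hTE'
    (two_le_card_of_mem_sym2 he (mem_sym2_vertexSpan heE'))
  have hT_ne : T.Nonempty := card_pos.1 (by omega)
  have hT_le' := hI T hTI hT_ne
  have hspan : vertexSpan T = vertexSpan E' :=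
    eq_of_subset_of_card_le hTE' (by omega)
  refine ⟨T, hTI, ?_, ?_⟩
  · unfold Tight23
    rw [hspan]
    omega
  · exact hspan ▸ mem_sym2_vertexSpan heE'

lemma disjoint_of_maximal_tight23 (hI : Sparse23 I)
    (h₁ : Maximal (fun T => T ⊆ I ∧ Tight23 T) T₁) (h₂ : Maximal (fun T => T ⊆ I ∧ Tight23 T) T₂)
    (hne : T₁ ≠ T₂) : Disjoint T₁ T₂ := by
  rw [disjoint_left]
  intro g hg₁ hg₂
  have hV : 2 ≤ (vertexSpan T₁ ∩ vertexSpan T₂).card :=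
    two_le_card_of_mem_sym2 (hI.not_isDiag (h₁.1.1 hg₁)) <|
      vertexSpan_subset_iff.1 (vertexSpan_inter_subset T₁ T₂) (mem_inter.2 ⟨hg₁, hg₂⟩)
  have hU : T₁ ∪ T₂ ⊆ I ∧ Tight23 (T₁ ∪ T₂) :=
    ⟨union_subset h₁.1.1 h₂.1.1, h₁.1.2.union hI h₁.1.1 h₂.1.1 h₂.1.2 hV⟩
  exact hne ((h₁.eq_of_le hU subset_union_left).trans (h₂.eq_of_le hU subset_union_right).symm)

lemma Sparse23.exists_insert_of_card_lt (hI : Sparse23 I) (hJ : Sparse23 J)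
    (hlt : I.card < J.card) : ∃ e ∈ J, e ∉ I ∧ Sparse23 (insert e I) := by
  classical
  by_contra! hJI
  set D := {T ∈ I.powerset | Maximal (fun T => T ⊆ I ∧ Tight23 T) T}
  have hJ_covered : ∀ e ∈ J, ∃ T ∈ D, e ∈ (vertexSpan T).sym2 := by
    intro e heJ
    obtain ⟨T, hTI, hT, heT⟩ : ∃ T ⊆ I, Tight23 T ∧ e ∈ (vertexSpan T).sym2 := by
      by_cases heI : e ∈ I
      · exact ⟨{e}, singleton_subset_iff.2 heI, tight23_singleton (hJ.not_isDiag heJ),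
          mem_sym2_vertexSpan (mem_singleton_self e)⟩
      · exact exists_tight23_of_not_sparse23_insert hI (hJ.not_isDiag heJ) (hJI e heJ heI)
    obtain ⟨M, hTM, hM⟩ := (Set.toFinite {T | T ⊆ I ∧ Tight23 T}).exists_le_maximal ⟨hTI, hT⟩
    exact ⟨M, mem_filter.2 ⟨mem_powerset.2 hM.1.1, hM⟩, sym2_mono (vertexSpan_mono hTM) heT⟩
  have hJ_block : ∀ T ∈ D, {e ∈ J | e ∈ (vertexSpan T).sym2}.card ≤ T.card := by
    intro T hT
    have hM := (mem_filter.1 hT).2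
    have hcount : ({e ∈ J | e ∈ (vertexSpan T).sym2}.card : ℤ) ≤ 2 * (vertexSpan T).card - 3 :=
      (hJ.mono (filter_subset _ J)).card_le
        (vertexSpan_subset_iff.2 fun e he => (mem_filter.1 he).2)
        hM.1.2.two_le_card_vertexSpan
    have hT : Tight23 T := hM.1.2
    unfold Tight23 at hT
    omega
  have hD_disjoint : (D : Set (Finset (Sym2 V))).PairwiseDisjoint id :=
    fun T₁ h₁ T₂ h₂ hne =>
      disjoint_of_maximal_tight23 hI (mem_filter.1 h₁).2 (mem_filter.1 h₂).2 hne
  have : J.card ≤ I.card := calc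
    J.card ≤ (D.biUnion fun T => {e ∈ J | e ∈ (vertexSpan T).sym2}).card :=
      card_le_card fun e he => by
        obtain ⟨T, hT, heT⟩ := hJ_covered e he
        exact mem_biUnion.2 ⟨T, hT, mem_filter.2 ⟨he, heT⟩⟩
    _ ≤ ∑ T ∈ D, {e ∈ J | e ∈ (vertexSpan T).sym2}.card := card_biUnion_le
    _ ≤ ∑ T ∈ D, T.card := sum_le_sum hJ_block
    _ = (D.biUnion id).card := (card_biUnion hD_disjoint).symm
    _ ≤ I.card := card_le_card (biUnion_subset.2 fun T hT => (mem_filter.1 hT).2.1.1)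
  omega

variable (V) in
def sparse23Matroid : Matroid (Sym2 V) :=
  (IndepMatroid.ofFinset {e : Sym2 V | ¬ e.IsDiag} Sparse23 sparse23_empty
    (fun _ _ hJ hIJ => hJ.mono hIJ) (fun _ _ => Sparse23.exists_insert_of_card_lt)
    (fun _ hI _ => hI.not_isDiag)).matroid

lemma sparse23Matroid_E : (sparse23Matroid V).E = {e : Sym2 V | ¬ e.IsDiag} := rfl

lemma sparse23Matroid_indep_iff {S : Set (Sym2 V)} :
    (sparse23Matroid V).Indep S ↔ Sparse23 (Set.toFinite S).toFinset := by
  exact IndepMatroid.matroid_indep_iff.trans <| (IndepMatroid.ofFinset_indep' ..).trans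
    ⟨fun h => h _ (Set.toFinite S).coe_toFinset.subset,
      fun hS J hJ => hS.mono (Set.Finite.subset_toFinset.2 hJ)⟩

end Sparsity

theorem exists_sparsity_matroid_general (n : ℕ) :
    ∃ M : Matroid (Sym2 (Fin n)),
      M.E = {e : Sym2 (Fin n) | ¬ e.IsDiag} ∧
      ∀ S : Set (Sym2 (Fin n)),
        M.Indep S ↔ ((∀ e ∈ S, ¬ e.IsDiag) ∧ Sparse23 (Set.toFinite S).toFinset) := by
  exact ⟨sparse23Matroid (Fin n), sparse23Matroid_E, fun S => sparse23Matroid_indep_iff.trans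
    ⟨fun hS => ⟨fun e he => hS.not_isDiag ((Set.toFinite S).mem_toFinset.2 he), hS⟩, And.right⟩⟩

/-- For every `n ≥ 2` there is a matroid on the edges of the complete graph `K_n`
(the non-diagonal unordered pairs of `Fin n`) whose independent sets are exactly the
`(2,3)`-sparse edge sets. -/
theorem exists_sparsity_matroid (n : ℕ) (hn : 2 ≤ n) :
    ∃ M : Matroid (Sym2 (Fin n)),
      M.E = {e : Sym2 (Fin n) | ¬ e.IsDiag} ∧
      ∀ S : Set (Sym2 (Fin n)),
        M.Indep S ↔ ((∀ e ∈ S, ¬ e.IsDiag) ∧ Sparse23 (Set.toFinite S).toFinset) :=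
  exists_sparsity_matroid_general n
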